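/- Let Z = (Z_1, …, Z_n) be uniformly distributed on the unit sphere of ℂⁿ. If p ≠ q then for any indices, E[ Z_{i_1}⋯Z_{i_p} · conj(Z_{j_1})⋯conj(Z_{j_q}) ] = 0. Moreover, for any k ≥ 1 and any indices i_1, …, i_k, j_1, …, j_k ∈ {1, …, n}, E[ Z_{i_1}⋯Z_{i_k} · conj(Z_{j_1})⋯conj(Z_{j_k}) ] = (1 / (n(n+1)⋯(n+k−1))) · Σ_{π ∈ S_k} δ_{i_1 j_{π(1)}} ⋯ δ_{i_k j_{π(k)}}, where the sum is over all permutations π of {1, …, k}. -/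

import Mathlib

/-!
Multiplying one coordinate by a phase `ζ` is unitary and multiplies `E[z^E conj(z)^F]` by
`ζ ^ E m * conj ζ ^ F m`; choosing `ζ` with this factor `-1` kills every moment whose holomorphic
and antiholomorphic exponents differ at some coordinate `m`, hence every moment with `p ≠ q`.

For the balanced moments `M α = E[|z^α|²]`, invariance under a real rotation `(c, s)` of the
`(p, q)`-plane gives `∑ⱼ C(K,j)² c^(2j) s^(2(K-j)) M(a + j e_p + (K-j) e_q) = M(a + K e_p)`.
Substituting `c² = t/(1+t)` turns this into a polynomial identity in `t ≥ 0`, whose coefficients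
give `C(K,j) M(a + j e_p + (K-j) e_q) = M(a + K e_p)`, i.e.
`(α_q + 1) M(α + e_p) = (α_p + 1) M(α + e_q)`. Summing over `q` and using `∑_q |z_q|² = 1`
yields `M α · n(n+1)⋯(n+|α|-1) = α!` by induction on `|α|`.

Finally `∏ₗ Z_{i l} ∏ₗ conj Z_{j l}` is the monomial whose exponents are the fibre sizes of `i`
and `j`, and the permutations `π` with `i = j ∘ π` form a coset of the stabilizer of `j`, of
size `∏ₘ (fibre size)!`.
-/

open MeasureTheory Matrix Finset
open scoped Matrix ComplexConjugate Nat

namespace Matrix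

variable {ι R : Type*} [Fintype ι] [DecidableEq ι] [CommRing R] [StarRing R]

theorem mem_unitaryGroup_of_star_mulVec_dotProduct {A : Matrix ι ι R}
    (h : ∀ z w : ι → R, star (A *ᵥ z) ⬝ᵥ (A *ᵥ w) = star z ⬝ᵥ w) :
    A ∈ unitaryGroup ι R := by
  rw [mem_unitaryGroup_iff']
  ext i j
  simpa [mulVec_single_one, dotProduct, mul_apply, one_apply, Pi.single_apply, eq_comm,
    apply_ite star]
    using h (Pi.single i 1) (Pi.single j 1)

theorem diagonal_mem_unitaryGroup {d : ι → R} (h : ∀ k, star (d k) * d k = 1) :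
    diagonal d ∈ unitaryGroup ι R := by
  refine mem_unitaryGroup_of_star_mulVec_dotProduct fun z w => ?_
  simp only [mulVec_diagonal, dotProduct, Pi.star_apply, star_mul]
  refine sum_congr rfl fun k _ => ?_
  linear_combination (star (z k) * w k) * h k

end Matrix

section PlaneRotation

variable {ι : Type*} [DecidableEq ι]

noncomputable def planeRotation (p q : ι) (c s : ℝ) : (ι → ℂ) →ₗ[ℂ] ι → ℂ where
  toFun z k := if k = p then c * z p + s * z q else if k = q then c * z q - s * z p else z k
  map_add' z w := by ext k; simp only [Pi.add_apply]; split_ifs <;> ring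
  map_smul' a z := by
    ext k; simp only [Pi.smul_apply, smul_eq_mul, RingHom.id_apply]; split_ifs <;> ring

theorem planeRotation_apply_left (p q : ι) (c s : ℝ) (z : ι → ℂ) :
    planeRotation p q c s z p = c * z p + s * z q := by
  simp [planeRotation]

theorem planeRotation_apply_right {p q : ι} (hpq : p ≠ q) (c s : ℝ) (z : ι → ℂ) :
    planeRotation p q c s z q = c * z q - s * z p := by
  simp [planeRotation, hpq.symm]

theorem planeRotation_apply_of_ne {p q k : ι} (hp : k ≠ p) (hq : k ≠ q) (c s : ℝ)
    (z : ι → ℂ) : planeRotation p q c s z k = z k := by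
  simp [planeRotation, hp, hq]

theorem planeRotation_star_dotProduct [Fintype ι] {p q : ι} (hpq : p ≠ q) {c s : ℝ}
    (hcs : c ^ 2 + s ^ 2 = 1) (z w : ι → ℂ) :
    star (planeRotation p q c s z) ⬝ᵥ planeRotation p q c s w = star z ⬝ᵥ w := by
  have hq : q ∈ univ.erase p := mem_erase.2 ⟨hpq.symm, mem_univ q⟩
  simp only [dotProduct, Pi.star_apply, Complex.star_def]
  rw [← add_sum_erase _ _ (mem_univ p), ← add_sum_erase _ _ hq,
    ← add_sum_erase _ _ (mem_univ p), ← add_sum_erase _ _ hq,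
    sum_congr rfl fun k hk => by
      obtain ⟨hkq, hkp⟩ : k ≠ q ∧ k ≠ p := by simpa using hk
      rw [planeRotation_apply_of_ne hkp hkq, planeRotation_apply_of_ne hkp hkq]]
  simp only [planeRotation_apply_left, planeRotation_apply_right hpq, map_add, map_sub, map_mul,
    Complex.conj_ofReal]
  have hc : (c : ℂ) ^ 2 + (s : ℂ) ^ 2 = 1 := by exact_mod_cast hcs
  linear_combination (conj (z p) * w p + conj (z q) * w q) * hc

theorem toMatrix'_planeRotation_mem_unitaryGroup [Fintype ι] {p q : ι} (hpq : p ≠ q) {c s : ℝ}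
    (hcs : c ^ 2 + s ^ 2 = 1) :
    LinearMap.toMatrix' (planeRotation p q c s) ∈ unitaryGroup ι ℂ :=
  mem_unitaryGroup_of_star_mulVec_dotProduct fun z w => by
    simpa only [LinearMap.toMatrix'_mulVec] using planeRotation_star_dotProduct hpq hcs z w

end PlaneRotation

namespace Complex

theorem exists_conj_mul_self_eq_one_and_pow_mul_conj_pow_eq_neg_one {a b : ℕ}
    (hab : a ≠ b) : ∃ ζ : ℂ, conj ζ * ζ = 1 ∧ ζ ^ a * conj ζ ^ b = -1 := by
  have hd : ((a : ℂ) - b) ≠ 0 := sub_ne_zero.2 (Nat.cast_injective.ne hab)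
  set x : ℂ := Real.pi * I / (a - b)
  have hx : conj x = -x := by simp [x, map_div₀]; ring
  refine ⟨exp x, ?_, ?_⟩
  · rw [← exp_conj, hx, ← exp_add, neg_add_cancel, exp_zero]
  · rw [← exp_conj, hx, ← exp_nat_mul, ← exp_nat_mul, ← exp_add, ← exp_pi_mul_I]
    congr 1
    simp only [x]
    field_simp
    ring

theorem norm_le_one_of_sum_normSq_eq_one {ι : Type*} [Fintype ι] {z : ι → ℂ}
    (h : ∑ j, normSq (z j) = 1) (m : ι) : ‖z m‖ ≤ 1 := by
  have : ‖z m‖ ^ 2 ≤ 1 := by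
    rw [← normSq_eq_norm_sq, ← h]
    exact single_le_sum (fun j _ => normSq_nonneg (z j)) (mem_univ m)
  exact (sq_le_one_iff₀ (norm_nonneg _)).1 this

open Polynomial in
theorem eq_of_forall_nonneg_sum_mul_pow_eq {N : ℕ} {b d : ℕ → ℂ}
    (h : ∀ t : ℝ, 0 ≤ t →
      ∑ j ∈ range N, b j * (t : ℂ) ^ j = ∑ j ∈ range N, d j * (t : ℂ) ^ j)
    {j : ℕ} (hj : j < N) : b j = d j := by
  set f : ℂ[X] := ∑ j ∈ range N, C (b j - d j) * X ^ j
  have hroots : ((↑) '' Set.Ici (0 : ℝ) : Set ℂ) ⊆ {x | f.IsRoot x} := by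
    rintro _ ⟨t, ht, rfl⟩
    simp [f, eval_finsetSum, sub_mul, sum_sub_distrib, h t ht]
  have hf : f = 0 := eq_zero_of_infinite_isRoot f
    (((Set.Ici_infinite 0).image ofReal_injective.injOn).mono hroots)
  have := congrArg (coeff · j) hf
  simp only [f, finsetSum_coeff, coeff_C_mul_X_pow, sum_ite_eq, mem_range, hj, if_true,
    coeff_zero] at this
  exact sub_eq_zero.1 this

end Complex

section SesquiMonomial

variable {ι : Type*} [Fintype ι]

noncomputable def sesquiMonomial (E F : ι → ℕ) (z : ι → ℂ) : ℂ :=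
  (∏ m, z m ^ E m) * ∏ m, conj (z m) ^ F m

@[fun_prop]
theorem continuous_sesquiMonomial (E F : ι → ℕ) : Continuous (sesquiMonomial E F) := by
  unfold sesquiMonomial; fun_prop

theorem norm_sesquiMonomial_le_one (E F : ι → ℕ) {z : ι → ℂ} (hz : ∀ m, ‖z m‖ ≤ 1) :
    ‖sesquiMonomial E F z‖ ≤ 1 := by
  rw [sesquiMonomial, norm_mul, norm_prod, norm_prod]
  refine mul_le_one₀ (prod_le_one (fun _ _ => norm_nonneg _) fun m _ => ?_)
    (prod_nonneg fun _ _ => norm_nonneg _)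
    (prod_le_one (fun _ _ => norm_nonneg _) fun m _ => ?_)
  · rw [norm_pow]; exact pow_le_one₀ (norm_nonneg _) (hz m)
  · rw [norm_pow, Complex.norm_conj]; exact pow_le_one₀ (norm_nonneg _) (hz m)

theorem sesquiMonomial_add (E F E' F' : ι → ℕ) (z : ι → ℂ) :
    sesquiMonomial (E + E') (F + F') z = sesquiMonomial E F z * sesquiMonomial E' F' z := by
  simp only [sesquiMonomial, Pi.add_apply, pow_add, prod_mul_distrib]
  ring

theorem sesquiMonomial_mul_apply (E F : ι → ℕ) (d z : ι → ℂ) :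
    sesquiMonomial E F (fun k => d k * z k) = sesquiMonomial E F d * sesquiMonomial E F z := by
  simp only [sesquiMonomial, map_mul, mul_pow, prod_mul_distrib]
  ring

theorem sesquiMonomial_congr {E F : ι → ℕ} {z w : ι → ℂ}
    (h : ∀ m, z m ≠ w m → E m = 0 ∧ F m = 0) : sesquiMonomial E F z = sesquiMonomial E F w := by
  unfold sesquiMonomial
  congr 1 <;> refine prod_congr rfl fun m _ => ?_ <;> by_cases hm : z m = w m <;>
    simp [hm, h m]

variable [DecidableEq ι]

theorem sesquiMonomial_single (m : ι) (j l : ℕ) (z : ι → ℂ) :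
    sesquiMonomial (Pi.single m j) (Pi.single m l) z = z m ^ j * conj (z m) ^ l := by
  simp [sesquiMonomial, Pi.single_apply]

theorem sesquiMonomial_update_one (m : ι) (ζ : ℂ) (E F : ι → ℕ) :
    sesquiMonomial E F (Function.update 1 m ζ) = ζ ^ E m * conj ζ ^ F m := by
  simp [sesquiMonomial, Function.update_apply, apply_ite (starRingEnd ℂ)]

theorem sesquiMonomial_planeRotation {p q : ι} (hpq : p ≠ q) {a : ι → ℕ} (hap : a p = 0)
    (haq : a q = 0) (K : ℕ) (c s : ℝ) (z : ι → ℂ) :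
    sesquiMonomial (a + Pi.single p K) (a + Pi.single p K) (planeRotation p q c s z) =
      ∑ j ∈ range (K + 1), ∑ l ∈ range (K + 1),
        ((K.choose j * K.choose l : ℕ) * (c : ℂ) ^ (j + l) * (s : ℂ) ^ (K - j + (K - l))) *
          sesquiMonomial (a + Pi.single p j + Pi.single q (K - j))
            (a + Pi.single p l + Pi.single q (K - l)) z := by
  have hrest : sesquiMonomial a a (planeRotation p q c s z) = sesquiMonomial a a z :=
    sesquiMonomial_congr fun k hk => by
      by_cases hp : k = p
      · subst hp; exact ⟨hap, hap⟩
      by_cases hq : k = q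
      · subst hq; exact ⟨haq, haq⟩
      exact absurd (planeRotation_apply_of_ne hp hq c s z) hk
  rw [sesquiMonomial_add, hrest, sesquiMonomial_single, planeRotation_apply_left, add_pow,
    map_add, map_mul, map_mul, Complex.conj_ofReal, Complex.conj_ofReal, add_pow,
    sum_mul_sum, mul_sum]
  refine sum_congr rfl fun j _ => ?_
  rw [mul_sum]
  refine sum_congr rfl fun l _ => ?_
  simp only [sesquiMonomial_add, sesquiMonomial_single, Nat.cast_mul]
  ring

end SesquiMonomial

theorem Nat.prod_factorial_add_single {ι : Type*} [Fintype ι] [DecidableEq ι] (a : ι → ℕ)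
    (p : ι) : ∏ m, ((a + Pi.single p 1 : ι → ℕ) m)! = (a p + 1) * ∏ m, (a m)! := by
  rw [← mul_prod_erase _ _ (mem_univ p), ← mul_prod_erase _ _ (mem_univ p),
    prod_congr rfl fun m hm => by
      rw [Pi.add_apply, Pi.single_eq_of_ne (ne_of_mem_erase hm), add_zero]]
  simp [Nat.factorial_succ, mul_assoc]

section SphereMoments

variable {ι Ω : Type*} [Fintype ι] [MeasurableSpace Ω]

noncomputable def mixedMoment (P : Measure Ω) (Z : Ω → ι → ℂ) (E F : ι → ℕ) : ℂ :=
  ∫ ω, sesquiMonomial E F (Z ω) ∂P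

variable {P : Measure Ω} {Z : Ω → ι → ℂ}

theorem integral_comp_mulVec_of_map_eq (hZ : Measurable Z) {V : Matrix ι ι ℂ}
    (hV : P.map (fun ω => V *ᵥ Z ω) = P.map Z) {f : (ι → ℂ) → ℂ} (hf : Measurable f) :
    ∫ ω, f (V *ᵥ Z ω) ∂P = ∫ ω, f (Z ω) ∂P := by
  have hVZ : Measurable fun ω => V *ᵥ Z ω :=
    (Continuous.matrix_mulVec continuous_const continuous_id).measurable.comp hZ
  rw [← integral_map hVZ.aemeasurable hf.aestronglyMeasurable, hV,
    integral_map hZ.aemeasurable hf.aestronglyMeasurable]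

theorem integrable_sesquiMonomial [IsFiniteMeasure P] (hZ : Measurable Z)
    (hsph : ∀ ω, ∑ j, Complex.normSq (Z ω j) = 1) (E F : ι → ℕ) :
    Integrable (fun ω => sesquiMonomial E F (Z ω)) P :=
  Integrable.mono' (integrable_const 1)
    ((continuous_sesquiMonomial E F).measurable.comp hZ).aestronglyMeasurable
    (ae_of_all _ fun ω => norm_sesquiMonomial_le_one E F
      (Complex.norm_le_one_of_sum_normSq_eq_one (hsph ω)))

variable [DecidableEq ι]

theorem mixedMoment_eq_zero_of_apply_ne (hZ : Measurable Z)
    (hinv : ∀ V ∈ unitaryGroup ι ℂ, P.map (fun ω => V *ᵥ Z ω) = P.map Z)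
    {E F : ι → ℕ} {m : ι} (h : E m ≠ F m) : mixedMoment P Z E F = 0 := by
  obtain ⟨ζ, hζ, hphase⟩ :=
    Complex.exists_conj_mul_self_eq_one_and_pow_mul_conj_pow_eq_neg_one h
  set d := Function.update (1 : ι → ℂ) m ζ
  have hd : diagonal d ∈ unitaryGroup ι ℂ := diagonal_mem_unitaryGroup fun k => by
    by_cases hk : k = m <;> simp [d, hk, hζ]
  have key := integral_comp_mulVec_of_map_eq hZ (hinv _ hd)
    (continuous_sesquiMonomial E F).measurable
  have hmulVec : ∀ z, diagonal d *ᵥ z = fun k => d k * z k :=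
    fun z => funext (mulVec_diagonal d z)
  simp only [hmulVec, sesquiMonomial_mul_apply, d, sesquiMonomial_update_one, hphase,
    integral_const_mul] at key
  rw [mixedMoment]
  linear_combination -key / 2

theorem sum_mixedMoment_add_single [IsFiniteMeasure P] (hZ : Measurable Z)
    (hsph : ∀ ω, ∑ j, Complex.normSq (Z ω j) = 1) (a : ι → ℕ) :
    ∑ m, mixedMoment P Z (a + Pi.single m 1) (a + Pi.single m 1) = mixedMoment P Z a a := by
  simp only [mixedMoment]
  rw [← integral_finsetSum _ fun m _ => integrable_sesquiMonomial hZ hsph _ _]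
  refine integral_congr_ae (ae_of_all _ fun ω => ?_)
  have hsph' : ∑ m, Z ω m * conj (Z ω m) = 1 := by
    simp_rw [Complex.mul_conj]; exact_mod_cast hsph ω
  simp only [sesquiMonomial_add, sesquiMonomial_single, pow_one, ← mul_sum, hsph', mul_one]

theorem sum_choose_sq_mul_mixedMoment [IsFiniteMeasure P] (hZ : Measurable Z)
    (hsph : ∀ ω, ∑ j, Complex.normSq (Z ω j) = 1)
    (hinv : ∀ V ∈ unitaryGroup ι ℂ, P.map (fun ω => V *ᵥ Z ω) = P.map Z)
    {p q : ι} (hpq : p ≠ q) {a : ι → ℕ} (hap : a p = 0) (haq : a q = 0) (K : ℕ) {c s : ℝ}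
    (hcs : c ^ 2 + s ^ 2 = 1) :
    ∑ j ∈ range (K + 1), ((K.choose j ^ 2 : ℕ) * ((c ^ 2) ^ j * (s ^ 2) ^ (K - j) : ℝ)) *
        mixedMoment P Z (a + Pi.single p j + Pi.single q (K - j))
          (a + Pi.single p j + Pi.single q (K - j)) =
      mixedMoment P Z (a + Pi.single p K) (a + Pi.single p K) := by
  have key := integral_comp_mulVec_of_map_eq hZ
    (hinv _ (toMatrix'_planeRotation_mem_unitaryGroup hpq hcs))
    (continuous_sesquiMonomial (a + Pi.single p K) (a + Pi.single p K)).measurable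
  have hint : ∀ E F, Integrable (fun ω => sesquiMonomial E F (Z ω)) P :=
    integrable_sesquiMonomial hZ hsph
  simp only [LinearMap.toMatrix'_mulVec, sesquiMonomial_planeRotation hpq hap haq] at key
  rw [integral_finsetSum _ fun j _ => integrable_finsetSum _ fun l _ => (hint _ _).const_mul _]
    at key
  have hfold : ∀ E F, ∫ ω, sesquiMonomial E F (Z ω) ∂P = mixedMoment P Z E F := fun _ _ => rfl
  simp only [integral_finsetSum _ fun l _ => (hint _ _).const_mul _, integral_const_mul, hfold]
    at key
  rw [← key]
  refine sum_congr rfl fun j hj => ?_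
  rw [sum_eq_single_of_mem j hj fun l _ hlj => mul_eq_zero_of_right _
    (mixedMoment_eq_zero_of_apply_ne hZ hinv (m := p) (by simpa [hap, hpq] using hlj.symm))]
  push_cast
  ring

theorem sum_choose_sq_mul_mixedMoment_mul_pow [IsFiniteMeasure P] (hZ : Measurable Z)
    (hsph : ∀ ω, ∑ j, Complex.normSq (Z ω j) = 1)
    (hinv : ∀ V ∈ unitaryGroup ι ℂ, P.map (fun ω => V *ᵥ Z ω) = P.map Z)
    {p q : ι} (hpq : p ≠ q) {a : ι → ℕ} (hap : a p = 0) (haq : a q = 0) (K : ℕ) {t : ℝ}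
    (ht : 0 ≤ t) :
    ∑ j ∈ range (K + 1), (K.choose j : ℂ) ^ 2 *
        mixedMoment P Z (a + Pi.single p j + Pi.single q (K - j))
          (a + Pi.single p j + Pi.single q (K - j)) * (t : ℂ) ^ j =
      (1 + t : ℂ) ^ K * mixedMoment P Z (a + Pi.single p K) (a + Pi.single p K) := by
  have ht1 : 0 < 1 + t := by linarith
  have hcs : √(t / (1 + t)) ^ 2 + √(1 / (1 + t)) ^ 2 = 1 := by
    rw [Real.sq_sqrt (by positivity), Real.sq_sqrt (by positivity)]
    field_simp
    ring
  have hrot := sum_choose_sq_mul_mixedMoment hZ hsph hinv hpq hap haq K hcs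
  rw [Real.sq_sqrt (by positivity), Real.sq_sqrt (by positivity)] at hrot
  rw [← hrot, mul_sum]
  refine sum_congr rfl fun j hj => ?_
  have hterm : (1 + t) ^ K * ((t / (1 + t)) ^ j * (1 / (1 + t)) ^ (K - j)) = t ^ j := by
    obtain ⟨r, rfl⟩ := Nat.exists_eq_add_of_le (mem_range_succ_iff.1 hj)
    rw [Nat.add_sub_cancel_left, pow_add, div_pow, div_pow, one_pow]
    field_simp
  rw [← Complex.ofReal_pow, ← hterm]
  push_cast
  ring

theorem choose_mul_mixedMoment [IsFiniteMeasure P] (hZ : Measurable Z)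
    (hsph : ∀ ω, ∑ j, Complex.normSq (Z ω j) = 1)
    (hinv : ∀ V ∈ unitaryGroup ι ℂ, P.map (fun ω => V *ᵥ Z ω) = P.map Z)
    {p q : ι} (hpq : p ≠ q) {a : ι → ℕ} (hap : a p = 0) (haq : a q = 0) {K j : ℕ} (hj : j ≤ K) :
    K.choose j * mixedMoment P Z (a + Pi.single p j + Pi.single q (K - j))
        (a + Pi.single p j + Pi.single q (K - j)) =
      mixedMoment P Z (a + Pi.single p K) (a + Pi.single p K) := by
  set M : ℕ → ℂ := fun j => mixedMoment P Z (a + Pi.single p j + Pi.single q (K - j))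
    (a + Pi.single p j + Pi.single q (K - j))
  set MK := mixedMoment P Z (a + Pi.single p K) (a + Pi.single p K)
  suffices h : (K.choose j : ℂ) ^ 2 * M j = K.choose j * MK by
    have hC : (K.choose j : ℂ) ≠ 0 := by exact_mod_cast (Nat.choose_pos hj).ne'
    exact mul_left_cancel₀ hC (by linear_combination h)
  refine Complex.eq_of_forall_nonneg_sum_mul_pow_eq (N := K + 1)
    (b := fun j => (K.choose j : ℂ) ^ 2 * M j) (d := fun j => K.choose j * MK)
    (fun t ht => ?_) (Nat.lt_succ_of_le hj)
  rw [sum_choose_sq_mul_mixedMoment_mul_pow hZ hsph hinv hpq hap haq K ht, add_comm, add_pow,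
    sum_mul]
  exact sum_congr rfl fun j _ => by ring

theorem mul_mixedMoment_add_single_comm [IsFiniteMeasure P] (hZ : Measurable Z)
    (hsph : ∀ ω, ∑ j, Complex.normSq (Z ω j) = 1)
    (hinv : ∀ V ∈ unitaryGroup ι ℂ, P.map (fun ω => V *ᵥ Z ω) = P.map Z) (a : ι → ℕ) (p q : ι) :
    (a q + 1 : ℂ) * mixedMoment P Z (a + Pi.single p 1) (a + Pi.single p 1) =
      (a p + 1) * mixedMoment P Z (a + Pi.single q 1) (a + Pi.single q 1) := by
  rcases eq_or_ne p q with rfl | hpq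
  · rfl
  -- `a + e_p` and `a + e_q` are the terms `j = a p + 1` and `j = a p` of the family
  -- `b + j e_p + (K - j) e_q` to which `choose_mul_mixedMoment` applies.
  set b := Function.update (Function.update a p 0) q 0
  have hbp : b p = 0 := by simp [b, hpq]
  have hbq : b q = 0 := by simp [b]
  set K := a p + a q + 1
  have hp : a + Pi.single p 1 = b + Pi.single p (a p + 1) + Pi.single q (K - (a p + 1)) := by
    ext k; simp only [b, K, Pi.add_apply, Function.update_apply, Pi.single_apply]
    split_ifs <;> subst_vars <;> first | contradiction | omega
  have hq : a + Pi.single q 1 = b + Pi.single p (a p) + Pi.single q (K - a p) := by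
    ext k; simp only [b, K, Pi.add_apply, Function.update_apply, Pi.single_apply]
    split_ifs <;> subst_vars <;> first | contradiction | omega
  have h1 := choose_mul_mixedMoment hZ hsph hinv hpq hbp hbq (K := K) (j := a p + 1) (by omega)
  have h0 := choose_mul_mixedMoment hZ hsph hinv hpq hbp hbq (K := K) (j := a p) (by omega)
  have hchoose : (K.choose (a p + 1) * (a p + 1) : ℂ) = K.choose (a p) * (a q + 1) := by
    have := Nat.choose_succ_right_eq K (a p)
    rw [show K - a p = a q + 1 by omega] at this
    exact_mod_cast this
  have hC : (K.choose (a p) : ℂ) ≠ 0 := by exact_mod_cast (Nat.choose_pos (by omega)).ne'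
  rw [hp, hq]
  refine mul_left_cancel₀ hC ?_
  linear_combination (a p + 1 : ℂ) * (h1 - h0) -
    mixedMoment P Z (b + Pi.single p (a p + 1) + Pi.single q (K - (a p + 1)))
      (b + Pi.single p (a p + 1) + Pi.single q (K - (a p + 1))) * hchoose

theorem sum_add_card_mul_mixedMoment_add_single [IsFiniteMeasure P] (hZ : Measurable Z)
    (hsph : ∀ ω, ∑ j, Complex.normSq (Z ω j) = 1)
    (hinv : ∀ V ∈ unitaryGroup ι ℂ, P.map (fun ω => V *ᵥ Z ω) = P.map Z) (a : ι → ℕ) (p : ι) :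
    ((∑ m, a m + Fintype.card ι : ℕ) : ℂ) *
        mixedMoment P Z (a + Pi.single p 1) (a + Pi.single p 1) =
      (a p + 1) * mixedMoment P Z a a :=
  calc ((∑ m, a m + Fintype.card ι : ℕ) : ℂ) *
        mixedMoment P Z (a + Pi.single p 1) (a + Pi.single p 1)
      = ∑ m, (a m + 1 : ℂ) * mixedMoment P Z (a + Pi.single p 1) (a + Pi.single p 1) := by
        rw [← sum_mul]; push_cast [sum_add_distrib]; simp
    _ = ∑ m, (a p + 1 : ℂ) * mixedMoment P Z (a + Pi.single m 1) (a + Pi.single m 1) :=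
        sum_congr rfl fun m _ => mul_mixedMoment_add_single_comm hZ hsph hinv a p m
    _ = (a p + 1) * mixedMoment P Z a a := by
        rw [← mul_sum, sum_mixedMoment_add_single hZ hsph a]

theorem mixedMoment_mul_ascFactorial [IsProbabilityMeasure P] (hZ : Measurable Z)
    (hsph : ∀ ω, ∑ j, Complex.normSq (Z ω j) = 1)
    (hinv : ∀ V ∈ unitaryGroup ι ℂ, P.map (fun ω => V *ᵥ Z ω) = P.map Z) (α : ι → ℕ) :
    mixedMoment P Z α α * (Fintype.card ι).ascFactorial (∑ m, α m) = ∏ m, ((α m)! : ℂ) := by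
  obtain ⟨k, hk⟩ : ∃ k, ∑ m, α m = k := ⟨_, rfl⟩
  induction k generalizing α with
  | zero =>
    obtain rfl : α = 0 := funext fun m => sum_eq_zero_iff.1 hk m (mem_univ m)
    simp [mixedMoment, sesquiMonomial]
  | succ k ih =>
    obtain ⟨p, hp⟩ : ∃ p, α p ≠ 0 := by
      by_contra! h
      simp [h] at hk
    obtain ⟨a, rfl⟩ : ∃ a, α = a + Pi.single p 1 := ⟨α - Pi.single p 1, by
      ext m; simp only [Pi.add_apply, Pi.sub_apply, Pi.single_apply]
      split_ifs <;> subst_vars <;> omega⟩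
    have ha : ∑ m, a m = k := by simpa [sum_add_distrib] using hk
    have hrec := sum_add_card_mul_mixedMoment_add_single hZ hsph hinv a p
    have ih' := ih a ha
    rw [ha] at hrec ih'
    rw [hk, Nat.ascFactorial_succ, ← Nat.cast_prod, Nat.prod_factorial_add_single]
    push_cast at hrec ⊢
    rw [← ih']
    linear_combination ((Fintype.card ι).ascFactorial k : ℂ) * hrec

end SphereMoments

section IndexCount

variable {κ ι : Type*} [Fintype κ] [DecidableEq ι]

def indexCount (i : κ → ι) (m : ι) : ℕ := #{l | i l = m}

theorem prod_comp_eq_prod_pow_indexCount [Fintype ι] {M : Type*} [CommMonoid M] (i : κ → ι)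
    (g : ι → M) : ∏ l, g (i l) = ∏ m, g m ^ indexCount i m := by
  rw [← prod_fiberwise univ i]
  refine prod_congr rfl fun m _ => ?_
  rw [prod_congr rfl fun l hl => by rw [(mem_filter.1 hl).2], prod_const]
  rfl

theorem sum_indexCount [Fintype ι] (i : κ → ι) : ∑ m, indexCount i m = Fintype.card κ :=
  (card_eq_sum_card_fiberwise fun l _ => mem_univ (i l)).symm

theorem indexCount_comp_perm (j : κ → ι) (π : Equiv.Perm κ) :
    indexCount (j ∘ π) = indexCount j :=
  funext fun _ => card_equiv π (by simp)

theorem exists_perm_of_indexCount_eq {i j : κ → ι} (h : indexCount i = indexCount j) :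
    ∃ π : Equiv.Perm κ, ∀ l, i l = j (π l) := by
  classical
  have e : ∀ m, {l // i l = m} ≃ {l // j l = m} := fun m => Fintype.equivOfCardEq <| by
    rw [Fintype.card_subtype, Fintype.card_subtype]; exact congrFun h m
  exact ⟨(Equiv.sigmaFiberEquiv i).symm.trans
      ((Equiv.sigmaCongrRight e).trans (Equiv.sigmaFiberEquiv j)),
    fun l => ((e (i l)) ⟨l, rfl⟩).2.symm⟩

theorem indexCount_ne_of_card_ne [Fintype ι] {κ' : Type*} [Fintype κ'] {i : κ → ι}
    {j : κ' → ι} (h : Fintype.card κ ≠ Fintype.card κ') : indexCount i ≠ indexCount j := fun hij =>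
  h (by rw [← sum_indexCount i, ← sum_indexCount j, hij])

variable [DecidableEq κ]

theorem card_perm_comp_eq_of_indexCount_eq [Fintype ι] {i j : κ → ι}
    (h : indexCount i = indexCount j) :
    #{π : Equiv.Perm κ | ∀ l, i l = j (π l)} = ∏ m, (indexCount j m)! := by
  obtain ⟨π₀, hπ₀⟩ := exists_perm_of_indexCount_eq h
  have hstab : {σ : Equiv.Perm κ // j ∘ σ = j} ≃ {π : Equiv.Perm κ // ∀ l, i l = j (π l)} :=
    (Equiv.mulRight π₀).subtypeEquiv fun σ => by
      refine ⟨fun hσ l => (hπ₀ l).trans (congrFun hσ (π₀ l)).symm, fun hσ => funext fun x => ?_⟩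
      have := hσ (π₀.symm x)
      rw [hπ₀, Equiv.apply_symm_apply] at this
      simpa using this.symm
  rw [← Fintype.card_subtype, ← Fintype.card_congr hstab, DomMulAct.stabilizer_card]
  simp only [Fintype.card_subtype, indexCount]

theorem sum_perm_prod_ite_eq_of_indexCount_eq [Fintype ι] {R : Type*} [CommSemiring R]
    {i j : κ → ι} (h : indexCount i = indexCount j) :
    ∑ π : Equiv.Perm κ, ∏ l, (if i l = j (π l) then (1 : R) else 0) =
      ∏ m, ((indexCount j m)! : R) := by
  simp only [Fintype.prod_boole, sum_boole, card_perm_comp_eq_of_indexCount_eq h, Nat.cast_prod]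

theorem sum_perm_prod_ite_eq_zero_of_indexCount_ne {R : Type*} [CommSemiring R] {i j : κ → ι}
    (h : indexCount i ≠ indexCount j) :
    ∑ π : Equiv.Perm κ, ∏ l, (if i l = j (π l) then (1 : R) else 0) = 0 :=
  sum_eq_zero fun π _ => by
    rw [Fintype.prod_boole, if_neg]
    exact fun hπ => h ((congrArg indexCount (funext hπ)).trans (indexCount_comp_perm j π))

end IndexCount

theorem integral_prod_mul_prod_conj_eq_mixedMoment {ι κ κ' Ω : Type*} [Fintype ι]
    [DecidableEq ι] [Fintype κ] [Fintype κ'] [MeasurableSpace Ω] (P : Measure Ω)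
    (Z : Ω → ι → ℂ) (i : κ → ι) (j : κ' → ι) :
    ∫ ω, (∏ l, Z ω (i l)) * ∏ l, conj (Z ω (j l)) ∂P =
      mixedMoment P Z (indexCount i) (indexCount j) :=
  integral_congr_ae <| ae_of_all _ fun ω => by
    dsimp only
    rw [sesquiMonomial, prod_comp_eq_prod_pow_indexCount i,
      prod_comp_eq_prod_pow_indexCount j (fun m => conj (Z ω m))]

theorem Nat.cast_ascFactorial_eq_prod {R : Type*} [CommSemiring R] (n k : ℕ) :
    (n.ascFactorial k : R) = ∏ l : Fin k, ((n : R) + (l : ℕ)) := by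
  rw [Nat.ascFactorial_eq_prod_range, Fin.prod_univ_eq_prod_range (fun l => (n : R) + l)]
  push_cast
  rfl

theorem stmt17 {n : ℕ}
    {Ω : Type*} [MeasurableSpace Ω] (P : Measure Ω) [IsProbabilityMeasure P]
    (Z : Ω → Fin n → ℂ) (hZmeas : Measurable Z)
    -- Z takes values in the unit sphere of ℂⁿ:
    (hZsph : ∀ ω, ∑ j, Complex.normSq (Z ω j) = 1)
    -- the law of Z is invariant under the unitary group (uniform on the sphere):
    (hZunif : ∀ V ∈ Matrix.unitaryGroup (Fin n) ℂ,
      Measure.map (fun ω => Matrix.mulVec V (Z ω)) P = Measure.map Z P) :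
    -- unbalanced moments vanish:
    (∀ p q : ℕ, p ≠ q → ∀ (i : Fin p → Fin n) (j : Fin q → Fin n),
      (∫ ω, (∏ l, Z ω (i l)) * ∏ l, conj (Z ω (j l)) ∂P) = 0) ∧
    -- balanced moments are given by a sum over permutations:
    ∀ k : ℕ, 1 ≤ k → ∀ i j : Fin k → Fin n,
      (∫ ω, (∏ l, Z ω (i l)) * ∏ l, conj (Z ω (j l)) ∂P) =
        (∏ l : Fin k, ((n : ℂ) + (l : ℕ)))⁻¹ *
          ∑ π : Equiv.Perm (Fin k), ∏ l, if i l = j (π l) then (1 : ℂ) else 0 := by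
  refine ⟨fun p q hpq i j => ?_, fun k hk i j => ?_⟩
  · obtain ⟨m, hm⟩ := Function.ne_iff.1 (indexCount_ne_of_card_ne (i := i) (j := j) (by simpa))
    rw [integral_prod_mul_prod_conj_eq_mixedMoment,
      mixedMoment_eq_zero_of_apply_ne hZmeas hZunif hm]
  rw [integral_prod_mul_prod_conj_eq_mixedMoment]
  by_cases h : indexCount i = indexCount j
  · have hn : n ≠ 0 := by rintro rfl; exact (i ⟨0, hk⟩).elim0
    have hM := mixedMoment_mul_ascFactorial hZmeas hZsph hZunif (indexCount j)
    rw [sum_indexCount, Fintype.card_fin, Fintype.card_fin, Nat.cast_ascFactorial_eq_prod] at hM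
    rw [sum_perm_prod_ite_eq_of_indexCount_eq h, h, ← hM, mul_comm, mul_inv_cancel_right₀]
    exact prod_ne_zero_iff.2 fun l _ => by norm_cast; omega
  · obtain ⟨m, hm⟩ := Function.ne_iff.1 h
    rw [sum_perm_prod_ite_eq_zero_of_indexCount_ne h,
      mixedMoment_eq_zero_of_apply_ne hZmeas hZunif hm, mul_zero]
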